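/- Let n ≥ 1 be an integer and r ∈ (0,1), and set c_r = (2r−1)/(r(1−r)) and σ(t) = max(0,t). Define g : ℝ → ℝ by g(x) = −σ(−x) + ((1−r)/r)·σ(x) − c_r·∑_{i=1}^{n−1} σ(x − i/n) − ((2r−1)/(1−r))·σ(x − 1) + c_r·∑_{i=1}^{n} σ(x − (i−1+r)/n). Then g = h^r; that is, g is a continuous piecewise-linear function with g(x) = x for all x ∉ [0,1], g(j/n) = j/n for j = 0,…,n, g((j+r)/n) = (j+1−r)/n for j = 0,…,n−1, and g is affine on each interval [j/n, (j+r)/n] and [(j+r)/n, (j+1)/n]. -/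

import Mathlib

/-!
Pairing the hidden units two by two, the network is
`x ↦ -σ(-x) + ((1-r)/r) σ(x) + c_r ∑_{i<n} ρ_i(x) + ((2r-1)/r) σ(x-1)`, where
`ρ_i = σ(· - (i+r)/n) - σ(· - (i+1)/n)` is a ramp rising from `0` to `(1-r)/n` on
`[(i+r)/n, (i+1)/n]`. On `[j/n, (j+1)/n]` the ramps below `j` are saturated, those above `j`
vanish and `ρ_j` is the single ReLU `σ(· - (j+r)/n)`, so the network is affine of slope
`(1-r)/r` on `[j/n, (j+r)/n]` and `(1-r)/r + c_r` on `[(j+r)/n, (j+1)/n]`; the value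
`c_r = (2r-1)/(r(1-r))` makes it the identity at the grid points `j/n` and for `x ∉ [0,1]`.
-/

open scoped NNReal

/-- `h` is affine on the interval `[a, b]`. -/
def AffineOn (h : ℝ → ℝ) (a b : ℝ) : Prop :=
  ∃ m c : ℝ, ∀ x ∈ Set.Icc a b, h x = m * x + c

/-- `h` is the continuous piecewise-linear function `h^r` from the paper. -/
def IsHr (n : ℕ) (r : ℝ) (h : ℝ → ℝ) : Prop :=
  Continuous h ∧
  (∀ x : ℝ, x ∉ Set.Icc (0:ℝ) 1 → h x = x) ∧
  (∀ j : ℕ, j ≤ n → h ((j : ℝ) / n) = (j : ℝ) / n) ∧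
  (∀ j : ℕ, j < n → h (((j : ℝ) + r) / n) = ((j : ℝ) + 1 - r) / n) ∧
  (∀ j : ℕ, j < n → AffineOn h ((j : ℝ) / n) (((j : ℝ) + r) / n)) ∧
  (∀ j : ℕ, j < n → AffineOn h (((j : ℝ) + r) / n) (((j : ℝ) + 1) / n))

open Finset

section ReluDifference

variable {a b x : ℝ}

lemma relu_sub_relu_eq_zero (hxa : x ≤ a) (hab : a ≤ b) :
    max 0 (x - a) - max 0 (x - b) = 0 := by
  rw [max_eq_left (by linarith), max_eq_left (by linarith), sub_zero]

lemma relu_sub_relu_eq_sub (hab : a ≤ b) (hbx : b ≤ x) :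
    max 0 (x - a) - max 0 (x - b) = b - a := by
  rw [max_eq_right (by linarith), max_eq_right (by linarith)]
  ring

lemma relu_sub_relu_eq_relu (hxb : x ≤ b) : max 0 (x - a) - max 0 (x - b) = max 0 (x - a) := by
  rw [max_eq_left (by linarith : x - b ≤ 0), sub_zero]

end ReluDifference

lemma sum_range_eq_nsmul_add_of_step {M : Type*} [AddCommMonoid M] {f : ℕ → M} {n j : ℕ}
    {c : M} (hj : j < n) (hlt : ∀ i < j, f i = c) (hgt : ∀ i, j < i → i < n → f i = 0) :
    ∑ i ∈ range n, f i = j • c + f j := by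
  obtain ⟨m, rfl⟩ : ∃ m, n = j + 1 + m := ⟨n - (j + 1), by omega⟩
  rw [sum_range_add, sum_range_succ, sum_congr rfl fun i hi => hlt i (mem_range.1 hi),
    sum_const, card_range, sum_eq_zero fun i hi => hgt _ (by omega) (by simp at hi; omega),
    add_zero]

lemma sum_Icc_one_eq_sum_range {M : Type*} [AddCommMonoid M] (f : ℕ → M) (n : ℕ) :
    ∑ i ∈ Icc 1 n, f i = ∑ i ∈ range n, f (i + 1) := by
  rw [← Ico_add_one_right_eq_Icc, sum_Ico_eq_sum_range, add_tsub_cancel_right]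
  simp only [add_comm]

noncomputable def rampSum (n : ℕ) (r x : ℝ) : ℝ :=
  ∑ i ∈ range n, (max 0 (x - ((i : ℝ) + r) / n) - max 0 (x - ((i : ℝ) + 1) / n))

noncomputable def hrNet (n : ℕ) (r x : ℝ) : ℝ :=
  -max 0 (-x) + (1 - r) / r * max 0 x + (2 * r - 1) / (r * (1 - r)) * rampSum n r x
    + (2 * r - 1) / r * max 0 (x - 1)

section Ramps

variable {n : ℕ} {r x : ℝ}

lemma rampSum_of_nonpos (hr : r ∈ Set.Icc (0 : ℝ) 1) (hx : x ≤ 0) : rampSum n r x = 0 :=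
  sum_eq_zero fun i _ => relu_sub_relu_eq_zero
    (hx.trans (by have := hr.1; positivity))
    (div_le_div_of_nonneg_right (by linarith [hr.2]) n.cast_nonneg)

lemma rampSum_of_one_le (hn : 0 < n) (hr : r ≤ 1) (hx : 1 ≤ x) : rampSum n r x = 1 - r := by
  have hn' : (0 : ℝ) < n := by exact_mod_cast hn
  have hramp : ∀ i ∈ range n, max 0 (x - ((i : ℝ) + r) / n) - max 0 (x - ((i : ℝ) + 1) / n)
      = (1 - r) / n := by
    intro i hi
    have hi' : (i : ℝ) + 1 ≤ n := by exact_mod_cast mem_range.1 hi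
    rw [relu_sub_relu_eq_sub (div_le_div_of_nonneg_right (by linarith) hn'.le)
      (((div_le_one hn').2 hi').trans hx)]
    ring
  rw [rampSum, sum_congr rfl hramp, sum_const, card_range, nsmul_eq_mul]
  field_simp

lemma rampSum_of_mem_Icc (hr : r ∈ Set.Icc (0 : ℝ) 1) {j : ℕ} (hj : j < n)
    (hx : x ∈ Set.Icc ((j : ℝ) / n) (((j : ℝ) + 1) / n)) :
    rampSum n r x = j * ((1 - r) / n) + max 0 (x - ((j : ℝ) + r) / n) := by
  obtain ⟨hr0, hr1⟩ := hr
  have hdiv : ∀ {a b : ℝ}, a ≤ b → a / n ≤ b / n :=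
    fun h => div_le_div_of_nonneg_right h n.cast_nonneg
  rw [rampSum, sum_range_eq_nsmul_add_of_step hj (c := (1 - r) / n), nsmul_eq_mul,
    relu_sub_relu_eq_relu hx.2]
  · intro i hij
    have hij' : (i : ℝ) + 1 ≤ j := by exact_mod_cast hij
    rw [relu_sub_relu_eq_sub (hdiv (by linarith)) ((hdiv hij').trans hx.1), ← sub_div]
    ring_nf
  · intro i hij _
    have hij' : (j : ℝ) + 1 ≤ i := by exact_mod_cast hij
    exact relu_sub_relu_eq_zero (hx.2.trans (hdiv (by linarith))) (hdiv (by linarith))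

end Ramps

section Network

variable {n : ℕ} {r x : ℝ}

lemma continuous_hrNet : Continuous (hrNet n r) := by
  unfold hrNet rampSum
  fun_prop

lemma hrNet_eq_self (hn : 0 < n) (hr : r ∈ Set.Ioo (0 : ℝ) 1) (hx : x ≤ 0 ∨ 1 ≤ x) :
    hrNet n r x = x := by
  obtain ⟨hr0, hr1⟩ := hr
  have h1r : 1 - r ≠ 0 := by linarith
  rcases hx with hx | hx
  · rw [hrNet, rampSum_of_nonpos ⟨hr0.le, hr1.le⟩ hx, max_eq_right (by linarith),
      max_eq_left hx, max_eq_left (by linarith)]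
    ring
  · rw [hrNet, rampSum_of_one_le hn hr1.le hx, max_eq_left (by linarith),
      max_eq_right (by linarith), max_eq_right (by linarith)]
    field_simp
    ring

lemma hrNet_of_mem_Icc (hr : r ∈ Set.Ioo (0 : ℝ) 1) {j : ℕ} (hj : j < n)
    (hx : x ∈ Set.Icc ((j : ℝ) / n) (((j : ℝ) + 1) / n)) :
    hrNet n r x = ((1 - r) * x + (2 * r - 1) * (j / n)) / r
      + (2 * r - 1) / (r * (1 - r)) * max 0 (x - ((j : ℝ) + r) / n) := by
  obtain ⟨hr0, hr1⟩ := hr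
  have hn : (0 : ℝ) < n := by exact_mod_cast j.zero_le.trans_lt hj
  have hj1 : ((j : ℝ) + 1) / n ≤ 1 := (div_le_one hn).2 (by exact_mod_cast hj)
  have h1r : 1 - r ≠ 0 := by linarith
  have hx0 : 0 ≤ x := le_trans (by positivity) hx.1
  rw [hrNet, rampSum_of_mem_Icc ⟨hr0.le, hr1.le⟩ hj hx, max_eq_left (by linarith),
    max_eq_right hx0, max_eq_left (show x - 1 ≤ 0 by linarith [hx.2])]
  field_simp
  ring

lemma hrNet_of_mem_Icc_left (hr : r ∈ Set.Ioo (0 : ℝ) 1) {j : ℕ} (hj : j < n)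
    (hx : x ∈ Set.Icc ((j : ℝ) / n) (((j : ℝ) + r) / n)) :
    hrNet n r x = ((1 - r) * x + (2 * r - 1) * (j / n)) / r := by
  have hjr : ((j : ℝ) + r) / n ≤ ((j : ℝ) + 1) / n :=
    div_le_div_of_nonneg_right (by linarith [hr.2]) n.cast_nonneg
  rw [hrNet_of_mem_Icc hr hj ⟨hx.1, hx.2.trans hjr⟩, max_eq_left (by linarith [hx.2]), mul_zero,
    add_zero]

lemma hrNet_of_mem_Icc_right (hr : r ∈ Set.Ioo (0 : ℝ) 1) {j : ℕ} (hj : j < n)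
    (hx : x ∈ Set.Icc (((j : ℝ) + r) / n) (((j : ℝ) + 1) / n)) :
    hrNet n r x = ((1 - r) * x + (2 * r - 1) * (j / n)) / r
      + (2 * r - 1) / (r * (1 - r)) * (x - ((j : ℝ) + r) / n) := by
  have hjr : (j : ℝ) / n ≤ ((j : ℝ) + r) / n :=
    div_le_div_of_nonneg_right (by linarith [hr.1]) n.cast_nonneg
  rw [hrNet_of_mem_Icc hr hj ⟨hjr.trans hx.1, hx.2⟩, max_eq_right (by linarith [hx.1])]

lemma isHr_hrNet (hn : 0 < n) (hr : r ∈ Set.Ioo (0 : ℝ) 1) : IsHr n r (hrNet n r) := by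
  have hn' : (0 : ℝ) < n := by exact_mod_cast hn
  have hjr : ∀ j : ℕ, (j : ℝ) / n ≤ ((j : ℝ) + r) / n :=
    fun j => div_le_div_of_nonneg_right (by linarith [hr.1]) hn'.le
  have hr0 : r ≠ 0 := hr.1.ne'
  refine ⟨continuous_hrNet, fun x hx => hrNet_eq_self hn hr ?_, fun j hj => ?_,
    fun j hj => ?_, fun j hj => ⟨(1 - r) / r, (2 * r - 1) * (j / n) / r, fun x hx => ?_⟩,
    fun j hj => ⟨(1 - r) / r + (2 * r - 1) / (r * (1 - r)),
      (2 * r - 1) * (j / n) / r - (2 * r - 1) / (r * (1 - r)) * (((j : ℝ) + r) / n),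
      fun x hx => ?_⟩⟩
  · by_contra! h
    exact hx ⟨h.1.le, h.2.le⟩
  · rcases hj.lt_or_eq with hj | rfl
    · rw [hrNet_of_mem_Icc_left hr hj ⟨le_rfl, hjr j⟩]
      field_simp
      ring
    · rw [div_self hn'.ne']
      exact hrNet_eq_self hn hr (Or.inr le_rfl)
  · rw [hrNet_of_mem_Icc_left hr hj ⟨hjr j, le_rfl⟩]
    field_simp
    ring
  · rw [hrNet_of_mem_Icc_left hr hj hx]
    ring
  · rw [hrNet_of_mem_Icc_right hr hj hx]
    ring

end Network

lemma reluNetwork_eq_hrNet {n : ℕ} (hn : 1 ≤ n) {r : ℝ} (hr0 : r ≠ 0) (hr1 : 1 - r ≠ 0)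
    (x : ℝ) :
    -(max 0 (-x)) + ((1 - r) / r) * max 0 x
        - (2 * r - 1) / (r * (1 - r)) * ∑ i ∈ Ico 1 n, max 0 (x - (i : ℝ) / n)
        - ((2 * r - 1) / (1 - r)) * max 0 (x - 1)
        + (2 * r - 1) / (r * (1 - r)) * ∑ i ∈ Icc 1 n, max 0 (x - ((i : ℝ) - 1 + r) / n)
      = hrNet n r x := by
  have hsteps : ∑ i ∈ Ico 1 n, max 0 (x - (i : ℝ) / n) + max 0 (x - 1)
      = ∑ i ∈ range n, max 0 (x - ((i : ℝ) + 1) / n) := by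
    have hlast : max 0 (x - 1) = max 0 (x - (n : ℝ) / n) := by
      rw [div_self (Nat.cast_ne_zero.2 (by omega))]
    rw [hlast, ← sum_Ico_succ_top hn (fun i : ℕ => max 0 (x - (i : ℝ) / n)),
      Ico_add_one_right_eq_Icc, sum_Icc_one_eq_sum_range]
    push_cast
    rfl
  have hshifted : ∑ i ∈ Icc 1 n, max 0 (x - ((i : ℝ) - 1 + r) / n)
      = ∑ i ∈ range n, max 0 (x - ((i : ℝ) + r) / n) := by
    rw [sum_Icc_one_eq_sum_range]
    push_cast
    simp only [add_sub_cancel_right]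
  -- `σ(x - 1)` is the missing `i = n` term of the first sum, leaving the coefficient
  -- `c_r - (2r-1)/(1-r) = (2r-1)/r` on it.
  rw [hrNet, rampSum, sum_sub_distrib, ← hsteps, ← hshifted]
  field_simp
  ring

theorem relu_network_realizes_hr (n : ℕ) (hn : 1 ≤ n) (r : ℝ) (hr : r ∈ Set.Ioo (0:ℝ) 1)
    (cr : ℝ) (hcr : cr = (2 * r - 1) / (r * (1 - r)))
    (g : ℝ → ℝ)
    (hg : ∀ x : ℝ,
      g x = -(max 0 (-x)) + ((1 - r) / r) * max 0 x
        - cr * ∑ i ∈ Finset.Ico 1 n, max 0 (x - (i : ℝ) / n)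
        - ((2 * r - 1) / (1 - r)) * max 0 (x - 1)
        + cr * ∑ i ∈ Finset.Icc 1 n, max 0 (x - ((i : ℝ) - 1 + r) / n)) :
    IsHr n r g := by
  subst hcr
  obtain rfl : g = hrNet n r := funext fun x =>
    (hg x).trans (reluNetwork_eq_hrNet hn hr.1.ne' (sub_ne_zero.2 hr.2.ne') x)
  exact isHr_hrNet hn hr
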